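/- arXiv:2006.00453 — 2 statements merged into one kernel-verified Lean document; each statement's English description precedes it below -/
import Mathlib

section
/- Let f : W → ℝ be a global function (every local minimizer is a global minimizer) on an open set W ⊆ ℝⁿ that maps onto itself under F, and let g : W → ℝ be twice continuously differentiable with ‖∇²g(w)‖ ≤ M for all w. For any 0 < η < 1/M, the MAML objective h(w) = f(w − η∇g(w)) is a global function, provided range(w ↦ w − η∇g(w)) = W. -/
open scoped RealInnerProductSpace
open Filter Topology

/-! The adaptation map `w ↦ w - η ∇g w` is a `C¹` map whose derivative `1 - η ∇²g w` is
invertible, because `‖η ∇²g w‖ ≤ η M < 1`. By the inverse function theorem it is therefore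
open at every point of `W`, so it carries local minimizers of the MAML objective on `W` to
local minimizers of `f` on `W`; these are global minimizers of `f`, and since the map sends
`W` into `W` they are global minimizers of the objective. -/

/-- `ℓ` is a global function on `Z`: every local minimizer over `Z` is a global
minimizer over `Z`. -/
def GlobalOn {E : Type*} [NormedAddCommGroup E] (ℓ : E → ℝ) (Z : Set E) : Prop :=
  ∀ z₀ ∈ Z, IsLocalMinOn ℓ Z z₀ → ∀ z ∈ Z, ℓ z₀ ≤ ℓ z

theorem GlobalOn.comp_of_nhds_le_map {E F : Type*} [NormedAddCommGroup E] [NormedAddCommGroup F]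
    {ℓ : F → ℝ} {Z : Set E} {Z' : Set F} {φ : E → F} (hℓ : GlobalOn ℓ Z') (hZ : IsOpen Z)
    (hmaps : Set.MapsTo φ Z Z') (hopen : ∀ z ∈ Z, 𝓝 (φ z) ≤ map φ (𝓝 z)) :
    GlobalOn (ℓ ∘ φ) Z := by
  intro z₀ hz₀ hmin z hz
  have hmin' : ∀ᶠ z in 𝓝 z₀, ℓ (φ z₀) ≤ ℓ (φ z) := hmin.isLocalMin (hZ.mem_nhds hz₀)
  have hℓmin : ∀ᶠ y in 𝓝 (φ z₀), ℓ (φ z₀) ≤ ℓ y := hopen z₀ hz₀ (eventually_map.2 hmin')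
  exact hℓ (φ z₀) (hmaps hz₀) (hℓmin.filter_mono nhdsWithin_le_nhds) (φ z) (hmaps hz)

theorem HasStrictFDerivAt.map_nhds_eq_of_norm_one_sub_lt_one {E : Type*}
    [NormedAddCommGroup E] [NormedSpace ℝ E] [CompleteSpace E] {φ : E → E} {A : E →L[ℝ] E}
    {z : E} (hφ : HasStrictFDerivAt φ A z) (hA : ‖1 - A‖ < 1) :
    map φ (𝓝 z) = 𝓝 (φ z) := by
  let e : E ≃L[ℝ] E := ContinuousLinearEquiv.ofUnit (Units.oneSub (1 - A) hA)
  have he : (e : E →L[ℝ] E) = A := by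
    change (Units.oneSub (1 - A) hA : E →L[ℝ] E) = A
    rw [Units.val_oneSub, sub_sub_cancel]
  exact (he ▸ hφ : HasStrictFDerivAt φ (e : E →L[ℝ] E) z).map_nhds_eq_of_equiv

theorem ContDiffOn.gradient {E : Type*} [NormedAddCommGroup E] [InnerProductSpace ℝ E]
    [CompleteSpace E] {g : E → ℝ} {W : Set E} {m : WithTop ℕ∞} (hg : ContDiffOn ℝ (m + 1) g W)
    (hW : IsOpen W) : ContDiffOn ℝ m (gradient g) W :=
  (InnerProductSpace.toDual ℝ E).symm.contDiff.comp_contDiffOn (hg.fderiv_of_isOpen hW le_rfl)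

theorem stmt_5_general {n : ℕ} (W : Set (EuclideanSpace ℝ (Fin n))) (hW : IsOpen W)
    (f g : EuclideanSpace ℝ (Fin n) → ℝ)
    (hfglob : GlobalOn f W)
    (hg : ContDiffOn ℝ 2 g W)
    (H : EuclideanSpace ℝ (Fin n) →
      (EuclideanSpace ℝ (Fin n) →L[ℝ] EuclideanSpace ℝ (Fin n)))
    (hHess : ∀ w ∈ W, HasFDerivAt (gradient g) (H w) w)
    (M : ℝ) (hbound : ∀ w ∈ W, ‖H w‖ ≤ M)
    (η : ℝ) (hη₀ : 0 < η) (hη : η < 1 / M)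
    (hrange : (fun w => w - η • gradient g w) '' W = W) :
    GlobalOn (fun w => f (w - η • gradient g w)) W := by
  have hgrad : ContDiffOn ℝ 1 (gradient g) W := hg.gradient hW
  have hM : 0 < M := by
    by_contra! hM
    linarith [one_div_nonpos.2 hM]
  refine hfglob.comp_of_nhds_le_map hW ((Set.mapsTo_image _ W).mono_right hrange.subset)
    fun w hw => ?_
  have hstrict : HasStrictFDerivAt (fun w => w - η • gradient g w) (1 - η • H w) w := by
    have hHw : HasStrictFDerivAt (gradient g) (H w) w := by
      rw [← (hHess w hw).fderiv]
      exact (hgrad.contDiffAt (hW.mem_nhds hw)).hasStrictFDerivAt one_ne_zero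
    exact (hasStrictFDerivAt_id w).sub (hHw.const_smul η)
  refine (hstrict.map_nhds_eq_of_norm_one_sub_lt_one ?_).ge
  calc ‖1 - (1 - η • H w)‖ = η * ‖H w‖ := by
        rw [sub_sub_cancel, norm_smul, Real.norm_of_nonneg hη₀.le]
    _ ≤ η * M := mul_le_mul_of_nonneg_left (hbound w hw) hη₀.le
    _ < 1 := by rwa [lt_div_iff₀ hM] at hη

/-- If `f` is a global function on open `W ⊆ ℝⁿ`, `g` is twice
continuously differentiable with Hessian bounded by `M`, `0 < η < 1/M`, and the
adaptation map `w ↦ w − η ∇g w` maps `W` onto `W`, then the MAML objective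
`h w = f (w − η ∇g w)` is a global function on `W`. -/
theorem stmt_5 {n : ℕ} (W : Set (EuclideanSpace ℝ (Fin n))) (hW : IsOpen W)
    (f g : EuclideanSpace ℝ (Fin n) → ℝ)
    (hf : ContinuousOn f W) (hfglob : GlobalOn f W)
    (hg : ContDiffOn ℝ 2 g W)
    (H : EuclideanSpace ℝ (Fin n) →
      (EuclideanSpace ℝ (Fin n) →L[ℝ] EuclideanSpace ℝ (Fin n)))
    (hHess : ∀ w ∈ W, HasFDerivAt (gradient g) (H w) w)
    (hHsym : ∀ w ∈ W, ∀ u v, ⟪H w u, v⟫ = ⟪u, H w v⟫)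
    (M : ℝ) (hM : 0 < M) (hbound : ∀ w ∈ W, ‖H w‖ ≤ M)
    (η : ℝ) (hη₀ : 0 < η) (hη : η < 1 / M)
    (hrange : (fun w => w - η • gradient g w) '' W = W) :
    GlobalOn (fun w => f (w - η • gradient g w)) W :=
  stmt_5_general W hW f g hfglob hg H hHess M hbound η hη₀ hη hrange
end

section
/- If f : W → ℝ is ε-global, g : W → ℝ is twice continuously differentiable, and w⋆ ∈ W is a local minimizer of h(w) = f(w − η∇g(w)) with η < 1/‖∇²g(w⋆)‖, then h(w⋆) − inf_{w∈W} h(w) ≤ ε. -/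
/-!
The gradient step `T w = w - η • ∇g w` has derivative `1 - η • ∇²g(w⋆)` at `w⋆`, which is
invertible because `‖η • ∇²g(w⋆)‖ < 1`. By the inverse function theorem `T` maps neighbourhoods
of `w⋆` onto neighbourhoods of `T w⋆`, so a local minimizer `w⋆` of `f ∘ T` yields the local
minimizer `T w⋆` of `f`. As `f` is ε-global and `T` maps `W` onto `W`, this gives the bound.
-/

/-- `ℓ` is ε-global on `Z`: every local minimizer of `ℓ` over `Z` is within `ε`
of the infimum of `ℓ` over `Z`. -/
def EpsGlobalOn {E : Type*} [NormedAddCommGroup E] (ℓ : E → ℝ) (Z : Set E) (ε : ℝ) : Prop :=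
  ∀ z₀ ∈ Z, IsLocalMinOn ℓ Z z₀ → ∀ z ∈ Z, ℓ z₀ ≤ ℓ z + ε

open Topology Filter

theorem IsLocalMin.of_comp_of_nhds_le_map {X Y β : Type*} [TopologicalSpace X]
    [TopologicalSpace Y] [Preorder β] {ℓ : Y → β} {T : X → Y} {x : X}
    (h : IsLocalMin (ℓ ∘ T) x) (hT : 𝓝 (T x) ≤ map T (𝓝 x)) : IsLocalMin ℓ (T x) :=
  hT (eventually_map.2 h)

theorem norm_smul_lt_one_of_lt_one_div {E : Type*} [SeminormedAddCommGroup E]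
    [NormedSpace ℝ E] {η : ℝ} (hη₀ : 0 ≤ η) {A : E} (hη : η < 1 / ‖A‖) : ‖η • A‖ < 1 := by
  rw [norm_smul, Real.norm_of_nonneg hη₀]
  rcases (norm_nonneg A).eq_or_lt with hA | hA
  · simp [← hA]
  · rwa [lt_div_iff₀ hA] at hη

section GradientStep

variable {E : Type*} [NormedAddCommGroup E] [NormedSpace ℝ E] {G : E → E} {G' : E → E →L[ℝ] E}
  {x : E}

theorem hasStrictFDerivAt_id_sub_smul (η : ℝ)
    (hG : ∀ᶠ w in 𝓝 x, HasFDerivAt G (G' w) w) (hG' : ContinuousAt G' x) :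
    HasStrictFDerivAt (fun w => w - η • G w) (ContinuousLinearMap.id ℝ E - η • G' x) x :=
  hasStrictFDerivAt_of_hasFDerivAt_of_continuousAt
    (hG.mono fun w hw => (hasFDerivAt_id w).sub (hw.const_smul η))
    ((hG'.const_smul η).const_sub _)

theorem map_nhds_id_sub_smul_eq [CompleteSpace E] {η : ℝ}
    (hG : ∀ᶠ w in 𝓝 x, HasFDerivAt G (G' w) w) (hG' : ContinuousAt G' x)
    (hη : ‖η • G' x‖ < 1) :
    map (fun w => w - η • G w) (𝓝 x) = 𝓝 (x - η • G x) :=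
  let e := ContinuousLinearEquiv.unitsEquiv ℝ E (Units.oneSub (η • G' x) hη)
  (show HasStrictFDerivAt _ (e : E →L[ℝ] E) x from
    hasStrictFDerivAt_id_sub_smul η hG hG').map_nhds_eq_of_equiv

end GradientStep

theorem stmt_6_general {n : ℕ} (W : Set (EuclideanSpace ℝ (Fin n))) (hW : IsOpen W)
    (f g : EuclideanSpace ℝ (Fin n) → ℝ) (ε : ℝ)
    (hfglob : EpsGlobalOn f W ε)
    (H : EuclideanSpace ℝ (Fin n) →
      (EuclideanSpace ℝ (Fin n) →L[ℝ] EuclideanSpace ℝ (Fin n)))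
    (hHess : ∀ w ∈ W, HasFDerivAt (gradient g) (H w) w)
    (hHcont : ContinuousOn H W)
    (η : ℝ) (hη₀ : 0 < η)
    (hrange : (fun w => w - η • gradient g w) '' W = W)
    (wstar : EuclideanSpace ℝ (Fin n)) (hwstar : wstar ∈ W)
    (hη : η < 1 / ‖H wstar‖)
    (hmin : IsLocalMinOn (fun w => f (w - η • gradient g w)) W wstar) :
    ∀ w ∈ W, f (wstar - η • gradient g wstar) ≤ f (w - η • gradient g w) + ε := by
  have hW_nhds : W ∈ 𝓝 wstar := hW.mem_nhds hwstar
  have hmap := map_nhds_id_sub_smul_eq (eventually_of_mem hW_nhds hHess)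
    (hHcont.continuousAt hW_nhds) (norm_smul_lt_one_of_lt_one_div hη₀.le hη)
  have hloc : IsLocalMin f (wstar - η • gradient g wstar) :=
    IsLocalMin.of_comp_of_nhds_le_map (T := fun w => w - η • gradient g w)
      (hmin.isLocalMin hW_nhds) hmap.ge
  have hstep_mem : ∀ w ∈ W, w - η • gradient g w ∈ W := fun w hw =>
    hrange ▸ Set.mem_image_of_mem _ hw
  intro w hw
  exact hfglob _ (hstep_mem wstar hwstar) (hloc.on W) _ (hstep_mem w hw)

/-- If `f` is ε-global, `g` is twice continuously differentiable (with
continuous Hessian `H`), and `w⋆` is a local minimizer of `h w = f (w − η ∇g w)`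
with `η < 1/‖H w⋆‖`, then `h w⋆ − inf_W h ≤ ε`. -/
theorem stmt_6 {n : ℕ} (W : Set (EuclideanSpace ℝ (Fin n))) (hW : IsOpen W)
    (f g : EuclideanSpace ℝ (Fin n) → ℝ) (ε : ℝ) (hε : 0 < ε)
    (hf : ContinuousOn f W) (hfglob : EpsGlobalOn f W ε)
    (hg : ContDiffOn ℝ 2 g W)
    (H : EuclideanSpace ℝ (Fin n) →
      (EuclideanSpace ℝ (Fin n) →L[ℝ] EuclideanSpace ℝ (Fin n)))
    (hHess : ∀ w ∈ W, HasFDerivAt (gradient g) (H w) w)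
    (hHcont : ContinuousOn H W)
    (η : ℝ) (hη₀ : 0 < η)
    (hrange : (fun w => w - η • gradient g w) '' W = W)
    (wstar : EuclideanSpace ℝ (Fin n)) (hwstar : wstar ∈ W)
    (hη : η < 1 / ‖H wstar‖)
    (hmin : IsLocalMinOn (fun w => f (w - η • gradient g w)) W wstar) :
    ∀ w ∈ W, f (wstar - η • gradient g wstar) ≤ f (w - η • gradient g w) + ε :=
  stmt_6_general W hW f g ε hfglob H hHess hHcont η hη₀ hrange wstar hwstar hη hmin
end
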